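/- arXiv:0804.4503 — 3 statements merged into one kernel-verified Lean document; each statement's English description precedes it below -/
import Mathlib

section
/- Let n ≥ 1 and let A, B : ({−1,1}^n → ℝ) satisfy A(−σ) = A(σ) and B(−σ) = −B(σ) for all σ. Let μ be the probability measure on pairs (σ, ε) ∈ {−1,1}^n × {−1,1} with weights proportional to exp(A(σ) + ε·B(σ)), and let ν be the probability measure on {−1,1}^n with weights proportional to exp(A(σ) + B(σ)). Then for every m ≥ 0 and every g : {−1,1}^n → ℝ with g(−σ) = (−1)^m g(σ) for all σ, the μ-expectation of g(σ)·ε^m equals the ν-expectation of g. -/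
/-!
Pair each term with `ε = -1` with the term `(-σ, 1)`: since `A` is even, `B` is odd and `g`
has parity `(-1)^m`, the two terms agree. Hence both sums over `(σ, ε)` are twice the
corresponding sums at `ε = 1`, and the factor `2` cancels in the ratio.
-/

open scoped BigOperators

/-- The set of spin values `{-1, 1}` as a finite subset of `ℝ`. -/
noncomputable abbrev SpinVal : Finset ℝ := {-1, 1}

/-- Spin configurations on `n` sites: maps `Fin n → ℝ` taking values in `{-1,1}`. -/
abbrev Conf (n : ℕ) := Fin n → SpinVal

/-- The globally flipped configuration `-σ`. -/
def negConf {n : ℕ} (σ : Conf n) : Conf n := fun i =>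
  ⟨-(σ i : ℝ), by
    have h := (σ i).2
    simp only [SpinVal, Finset.mem_insert, Finset.mem_singleton] at h ⊢
    rcases h with h | h <;> simp [h]⟩

open Real

lemma negConf_involutive {n : ℕ} : Function.Involutive (negConf (n := n)) := by
  intro σ
  funext i
  exact Subtype.ext (neg_neg _)

lemma sum_spinVal {M : Type*} [AddCommMonoid M] (f : ℝ → M) :
    ∑ ε : SpinVal, f ε = f (-1) + f 1 := by
  rw [Finset.sum_coe_sort SpinVal f, Finset.sum_pair (by norm_num)]

theorem sum_spinVal_pow_mul_exp_eq_two_mul {α : Type*} [Fintype α] {ι : α → α}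
    (hι : Function.Involutive ι) {A B g : α → ℝ} {m : ℕ}
    (hA : ∀ σ, A (ι σ) = A σ) (hB : ∀ σ, B (ι σ) = -B σ)
    (hg : ∀ σ, g (ι σ) = (-1) ^ m * g σ) :
    ∑ σ, ∑ ε : SpinVal, g σ * (ε : ℝ) ^ m * exp (A σ + ε * B σ)
      = 2 * ∑ σ, g σ * exp (A σ + B σ) := by
  have flip : ∑ σ, g σ * (-1) ^ m * exp (A σ + -1 * B σ) = ∑ σ, g σ * exp (A σ + B σ) := by
    refine Fintype.sum_bijective ι hι.bijective _ _ fun σ => ?_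
    rw [hg, hA, hB]
    ring_nf
  have split σ : ∑ ε : SpinVal, g σ * (ε : ℝ) ^ m * exp (A σ + ε * B σ)
      = g σ * (-1) ^ m * exp (A σ + -1 * B σ) + g σ * exp (A σ + B σ) := by
    rw [sum_spinVal fun ε : ℝ => g σ * ε ^ m * exp (A σ + ε * B σ), one_pow, mul_one, one_mul]
  rw [Fintype.sum_congr _ _ split, Finset.sum_add_distrib, flip, two_mul]

theorem filling_identity_general (n : ℕ) (A B : Conf n → ℝ)
    (hA : ∀ σ, A (negConf σ) = A σ) (hB : ∀ σ, B (negConf σ) = - B σ)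
    (m : ℕ) (g : Conf n → ℝ) (hg : ∀ σ, g (negConf σ) = (-1 : ℝ) ^ m * g σ) :
    (∑ σ : Conf n, ∑ ε : SpinVal, g σ * (ε : ℝ) ^ m * Real.exp (A σ + (ε : ℝ) * B σ)) /
        (∑ σ : Conf n, ∑ ε : SpinVal, Real.exp (A σ + (ε : ℝ) * B σ))
      = (∑ σ : Conf n, g σ * Real.exp (A σ + B σ)) /
          (∑ σ : Conf n, Real.exp (A σ + B σ)) := by
  have partition_eq := sum_spinVal_pow_mul_exp_eq_two_mul negConf_involutive hA hB
    (g := fun _ => 1) (m := 0) (fun _ => by simp)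
  simp only [pow_zero, one_mul] at partition_eq
  rw [sum_spinVal_pow_mul_exp_eq_two_mul negConf_involutive hA hB hg, partition_eq,
    mul_div_mul_left _ _ two_ne_zero]

/-- **Filling mechanism at fixed disorder.** Let `A` be even and `B` odd under the
global spin flip.  Let `μ` be the probability measure on pairs `(σ, ε)` with weights
proportional to `exp(A(σ) + ε·B(σ))` and let `ν` be the probability measure on
configurations with weights proportional to `exp(A(σ) + B(σ))`.  Then for every `m`
and every `g` with parity `(-1)^m` under the flip, the `μ`-expectation of
`g(σ)·ε^m` equals the `ν`-expectation of `g`. -/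
theorem filling_identity (n : ℕ) (hn : 1 ≤ n) (A B : Conf n → ℝ)
    (hA : ∀ σ, A (negConf σ) = A σ) (hB : ∀ σ, B (negConf σ) = - B σ)
    (m : ℕ) (g : Conf n → ℝ) (hg : ∀ σ, g (negConf σ) = (-1 : ℝ) ^ m * g σ) :
    (∑ σ : Conf n, ∑ ε : SpinVal, g σ * (ε : ℝ) ^ m * Real.exp (A σ + (ε : ℝ) * B σ)) /
        (∑ σ : Conf n, ∑ ε : SpinVal, Real.exp (A σ + (ε : ℝ) * B σ))
      = (∑ σ : Conf n, g σ * Real.exp (A σ + B σ)) /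
          (∑ σ : Conf n, Real.exp (A σ + B σ)) :=
  filling_identity_general n A B hA hB m g hg
end

section
/- Fix N ≥ 1, α̃ > 0, β ≥ 0 and set θ = tanh β. For every t ∈ (0,1), the cavity function t ↦ Ψ_N(α̃, β; t) is differentiable and ∂Ψ_N/∂t = 2α̃·ln cosh β + 2α̃ · E_t[ (1/N) Σ_{i₀∈Fin N} ln(1 + θ·ω_t(σ_{i₀})) ]. -/
open scoped BigOperators

/-- Hamiltonian of the diluted ferromagnet for the disorder realization `(k, b)`:
`H(σ) = -Σ_{ν<k} σ_{(bν).1} σ_{(bν).2}`. -/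
noncomputable def Hdil {n k : ℕ} (b : Fin k → Fin n × Fin n) (σ : Conf n) : ℝ :=
  - ∑ ν : Fin k, (σ (b ν).1 : ℝ) * (σ (b ν).2 : ℝ)

/-- Partition function of the diluted ferromagnet at inverse temperature `β`. -/
noncomputable def Zdil (n : ℕ) (β : ℝ) {k : ℕ} (b : Fin k → Fin n × Fin n) : ℝ :=
  ∑ σ : Conf n, Real.exp (-β * Hdil b σ)

/-- Gibbs expectation `ω` of an observable for a fixed disorder realization. -/
noncomputable def gibbs (n : ℕ) (β : ℝ) {k : ℕ} (b : Fin k → Fin n × Fin n)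
    (f : Conf n → ℝ) : ℝ :=
  (∑ σ : Conf n, f σ * Real.exp (-β * Hdil b σ)) / Zdil n β b

/-- The Poisson probability mass function with mean `lam`. -/
noncomputable def poissonPMF (lam : ℝ) (k : ℕ) : ℝ :=
  Real.exp (-lam) * lam ^ k / (Nat.factorial k : ℝ)

/-- Quenched expectation at connectivity `α` on `n` sites: the number of bonds `k` is
Poisson(αn) and the `2k` endpoints are i.i.d. uniform on the `n` sites. -/
noncomputable def quenched (n : ℕ) (α : ℝ)
    (F : (k : ℕ) → (Fin k → Fin n × Fin n) → ℝ) : ℝ :=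
  ∑' k : ℕ, poissonPMF (α * n) k *
    ((∑ b : Fin k → Fin n × Fin n, F k b) / ((n : ℝ) ^ 2) ^ k)

/-- Boltzmann weight of the `t`-perturbed (cavity) system with realization
`(k, b, k', l)`: `exp(β Σ_ν σσ + β Σ_μ σ_{l μ})`. -/
noncomputable def cavWeight (n : ℕ) (β : ℝ) {k k' : ℕ} (b : Fin k → Fin n × Fin n)
    (l : Fin k' → Fin n) (σ : Conf n) : ℝ :=
  Real.exp (β * ∑ ν : Fin k, (σ (b ν).1 : ℝ) * (σ (b ν).2 : ℝ)
    + β * ∑ μ : Fin k', (σ (l μ) : ℝ))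

/-- Partition function of the `t`-perturbed (cavity) system. -/
noncomputable def Zcav (n : ℕ) (β : ℝ) {k k' : ℕ} (b : Fin k → Fin n × Fin n)
    (l : Fin k' → Fin n) : ℝ :=
  ∑ σ : Conf n, cavWeight n β b l σ

/-- Gibbs expectation `ω_t` of the `t`-perturbed (cavity) system at fixed realization. -/
noncomputable def gibbsCav (n : ℕ) (β : ℝ) {k k' : ℕ} (b : Fin k → Fin n × Fin n)
    (l : Fin k' → Fin n) (f : Conf n → ℝ) : ℝ :=
  (∑ σ : Conf n, f σ * cavWeight n β b l σ) / Zcav n β b l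

/-- Quenched expectation `E_t` of the `t`-perturbed system at connectivity `αt`:
`k` is Poisson(αt·n), `k'` is Poisson(2·αt·t), and all indices are i.i.d. uniform. -/
noncomputable def quenchedCav (n : ℕ) (αt t : ℝ)
    (F : (k : ℕ) → (Fin k → Fin n × Fin n) → (k' : ℕ) → (Fin k' → Fin n) → ℝ) : ℝ :=
  ∑' k : ℕ, ∑' k' : ℕ, poissonPMF (αt * n) k * poissonPMF (2 * αt * t) k' *
    ((∑ b : Fin k → Fin n × Fin n, ∑ l : Fin k' → Fin n, F k b k' l) /
      (((n : ℝ) ^ 2) ^ k * (n : ℝ) ^ k'))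

/-- The cavity function `Ψ_n(α̃, β; t) = E_t[ln Z_{n,t}] - E[ln Z_n(α̃, β)]`. -/
noncomputable def Psi (n : ℕ) (αt β t : ℝ) : ℝ :=
  quenchedCav n αt t (fun _ b _ l => Real.log (Zcav n β b l))
    - quenched n αt (fun _ b => Real.log (Zdil n β b))

/-!
Adding one external field at a site `i₀` multiplies the Boltzmann weight by
`e^{βσ_{i₀}} = cosh β + σ_{i₀} sinh β`, so `Z_{n,t}` gets multiplied by
`cosh β · (1 + tanh β · ω_t(σ_{i₀}))`. Conditioning on the number `k'` of fields writes
`E_t[ln Z_{n,t}] = Σ_{k'} π_{2α̃t}(k') G(k')` with Poisson weights `π_μ`, and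
`d/dμ Σ_k π_μ(k) g(k) = Σ_k π_μ(k) (g(k+1) - g(k))`; by the product formula, `G(k'+1) - G(k')`
is `ln cosh β` plus the conditional mean of `(1/n) Σ_{i₀} ln(1 + tanh β · ω_t(σ_{i₀}))`.
The bound `|ln Z_{n,t}| ≤ (2^n + 1) e^{|β|(k+k')}` justifies exchanging the Poisson sums and
differentiating termwise.
-/

open Real Finset
open scoped Nat

instance : Nonempty SpinVal := ⟨⟨1, by simp⟩⟩

lemma spin_eq_neg_one_or_one (s : SpinVal) : (s : ℝ) = -1 ∨ (s : ℝ) = 1 := by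
  simpa only [SpinVal, mem_insert, mem_singleton] using s.2

lemma abs_spin (s : SpinVal) : |(s : ℝ)| = 1 := by
  rcases spin_eq_neg_one_or_one s with h | h <;> simp [h]

lemma exp_mul_spin (β : ℝ) (s : SpinVal) : exp (β * s) = cosh β + s * sinh β := by
  rcases spin_eq_neg_one_or_one s with h | h <;>
    simp [h, cosh_add_sinh, ← sub_eq_add_neg, cosh_sub_sinh]

lemma abs_log_le_add_inv {x : ℝ} (hx : 0 < x) : |log x| ≤ x + x⁻¹ := by
  have h := log_le_sub_one_of_pos hx
  have h' := log_le_sub_one_of_pos (inv_pos.2 hx)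
  rw [log_inv] at h'
  exact abs_le.2 ⟨by linarith [inv_pos.2 hx], by linarith [inv_pos.2 hx]⟩

lemma abs_sum_div_card_le {ι : Type*} [Fintype ι] [Nonempty ι] {f : ι → ℝ} {C : ℝ}
    (hf : ∀ i, |f i| ≤ C) : |(∑ i, f i) / Fintype.card ι| ≤ C := by
  rw [abs_div, Nat.abs_cast, div_le_iff₀ (by exact_mod_cast Fintype.card_pos)]
  calc |∑ i, f i| ≤ ∑ i, |f i| := abs_sum_le_sum_abs _ _
    _ ≤ ∑ _i : ι, C := sum_le_sum fun i _ => hf i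
    _ = C * Fintype.card ι := by simp [mul_comm]

section Realization

variable {n k k' : ℕ} (β : ℝ) (b : Fin k → Fin n × Fin n) (l : Fin k' → Fin n)

lemma Zcav_pos : 0 < Zcav n β b l :=
  sum_pos (fun _ _ => exp_pos _) univ_nonempty

lemma abs_log_cavWeight_le (σ : Conf n) :
    |log (cavWeight n β b l σ)| ≤ |β| * k + |β| * k' := by
  have hbonds : |∑ ν, (σ (b ν).1 : ℝ) * σ (b ν).2| ≤ k :=
    (abs_sum_le_sum_abs _ _).trans (by simp [abs_mul, abs_spin])
  have hfields : |∑ μ, (σ (l μ) : ℝ)| ≤ k' :=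
    (abs_sum_le_sum_abs _ _).trans (by simp [abs_spin])
  rw [cavWeight, log_exp]
  refine (abs_add_le _ _).trans ?_
  rw [abs_mul, abs_mul]
  gcongr

lemma abs_log_Zcav_le :
    |log (Zcav n β b l)| ≤ (Fintype.card (Conf n) + 1) * exp |β| ^ k * exp |β| ^ k' := by
  set E := exp (|β| * k + |β| * k')
  have hw : ∀ σ, E⁻¹ ≤ cavWeight n β b l σ ∧ cavWeight n β b l σ ≤ E := fun σ => by
    have h := abs_le.1 (abs_log_cavWeight_le β b l σ)
    rw [← exp_neg, ← exp_log (show 0 < cavWeight n β b l σ from exp_pos _)]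
    exact ⟨exp_le_exp.2 h.1, exp_le_exp.2 h.2⟩
  have hZ_le : Zcav n β b l ≤ Fintype.card (Conf n) * E :=
    (sum_le_sum fun σ _ => (hw σ).2).trans_eq (by simp)
  have hZ_inv_le : (Zcav n β b l)⁻¹ ≤ E :=
    inv_le_of_inv_le₀ (exp_pos _) ((hw (Classical.arbitrary _)).1.trans
      (single_le_sum (f := cavWeight n β b l) (fun σ _ => (exp_pos _).le) (mem_univ _)))
  have hE : E = exp |β| ^ k * exp |β| ^ k' := by
    simp only [E]
    rw [exp_add, ← exp_nat_mul, ← exp_nat_mul, mul_comm (k : ℝ), mul_comm (k' : ℝ)]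
  calc |log (Zcav n β b l)| ≤ Zcav n β b l + (Zcav n β b l)⁻¹ := abs_log_le_add_inv (Zcav_pos β b l)
    _ ≤ Fintype.card (Conf n) * E + E := add_le_add hZ_le hZ_inv_le
    _ = _ := by rw [hE]; ring

lemma abs_gibbsCav_spin_le_one (i₀ : Fin n) :
    |gibbsCav n β b l (fun σ => (σ i₀ : ℝ))| ≤ 1 := by
  rw [gibbsCav, abs_div, abs_of_pos (Zcav_pos β b l), div_le_one (Zcav_pos β b l)]
  refine (abs_sum_le_sum_abs _ _).trans_eq ?_
  simp [abs_mul, abs_spin, abs_of_pos (exp_pos _), Zcav, cavWeight]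

lemma cavWeight_cons (i₀ : Fin n) (σ : Conf n) :
    cavWeight n β b (Fin.cons i₀ l) σ = cavWeight n β b l σ * exp (β * σ i₀) := by
  rw [cavWeight, cavWeight, ← exp_add, Fin.sum_univ_succ]
  simp only [Fin.cons_zero, Fin.cons_succ]
  congr 1
  ring

lemma Zcav_cons (i₀ : Fin n) :
    Zcav n β b (Fin.cons i₀ l) =
      cosh β * Zcav n β b l * (1 + tanh β * gibbsCav n β b l (fun σ => (σ i₀ : ℝ))) := by
  have hsum : Zcav n β b (Fin.cons i₀ l) =
      cosh β * Zcav n β b l + sinh β * ∑ σ : Conf n, (σ i₀ : ℝ) * cavWeight n β b l σ := by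
    simp only [Zcav, cavWeight_cons, exp_mul_spin, mul_sum]
    rw [← sum_add_distrib]
    exact sum_congr rfl fun σ _ => by ring
  rw [hsum, gibbsCav, tanh_eq_sinh_div_cosh]
  field_simp [(Zcav_pos β b l).ne', (cosh_pos β).ne']

lemma one_add_tanh_mul_gibbsCav_pos (i₀ : Fin n) :
    0 < 1 + tanh β * gibbsCav n β b l (fun σ => (σ i₀ : ℝ)) := by
  have h := Zcav_pos β b (Fin.cons i₀ l)
  rw [Zcav_cons] at h
  exact pos_of_mul_pos_right h (mul_pos (cosh_pos β) (Zcav_pos β b l)).le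

lemma log_Zcav_cons (i₀ : Fin n) :
    log (Zcav n β b (Fin.cons i₀ l)) = log (Zcav n β b l) + log (cosh β)
      + log (1 + tanh β * gibbsCav n β b l (fun σ => (σ i₀ : ℝ))) := by
  rw [Zcav_cons, log_mul (mul_pos (cosh_pos β) (Zcav_pos β b l)).ne'
    (one_add_tanh_mul_gibbsCav_pos β b l i₀).ne', log_mul (cosh_pos β).ne' (Zcav_pos β b l).ne']
  ring

lemma abs_log_one_add_tanh_mul_gibbsCav_le (i₀ : Fin n) :
    |log (1 + tanh β * gibbsCav n β b l (fun σ => (σ i₀ : ℝ)))| ≤ 2 + (1 - |tanh β|)⁻¹ := by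
  have hpos := one_add_tanh_mul_gibbsCav_pos β b l i₀
  set u := tanh β * gibbsCav n β b l (fun σ => (σ i₀ : ℝ)) with hu_def
  have hu : |u| ≤ |tanh β| := by
    rw [hu_def, abs_mul]
    exact mul_le_of_le_one_right (abs_nonneg _) (abs_gibbsCav_spin_le_one β b l i₀)
  have hθ := abs_tanh_lt_one β
  refine (abs_log_le_add_inv hpos).trans (add_le_add ?_ ?_)
  · linarith [le_abs_self u]
  · exact inv_anti₀ (by linarith) (by linarith [neg_abs_le u])

end Realization

section PoissonSeries

variable {g : ℕ → ℝ} {C c : ℝ}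

lemma abs_le_abs_mul_abs_pow (hg : ∀ k, |g k| ≤ C * c ^ k) (k : ℕ) : |g k| ≤ |C| * |c| ^ k :=
  (hg k).trans ((le_abs_self _).trans_eq (by rw [abs_mul, abs_pow]))

lemma summable_pow_div_factorial_mul (hg : ∀ k, |g k| ≤ C * c ^ k) (x : ℝ) :
    Summable (fun k => x ^ k / k ! * g k) := by
  refine .of_norm_bounded ((summable_pow_div_factorial (|x| * |c|)).mul_left |C|) fun k => ?_
  rw [norm_eq_abs, abs_mul, abs_div, abs_pow, Nat.abs_cast]
  calc |x| ^ k / k ! * |g k| ≤ |x| ^ k / k ! * (|C| * |c| ^ k) := by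
        gcongr; exact abs_le_abs_mul_abs_pow hg k
    _ = |C| * ((|x| * |c|) ^ k / k !) := by ring

lemma hasDerivAt_tsum_pow_div_factorial_mul (hg : ∀ k, |g k| ≤ C * c ^ k) (x : ℝ) :
    HasDerivAt (fun y => ∑' k, y ^ k / k ! * g k) (∑' k, x ^ k / k ! * g (k + 1)) x := by
  obtain ⟨R, hxR⟩ : ∃ R, |x| < R := ⟨|x| + 1, lt_add_one _⟩
  have hR : 0 < R := (abs_nonneg x).trans_lt hxR
  have hshift : (fun y => ∑' k, y ^ k / k ! * g k)
      = fun y => (∑' m, y ^ (m + 1) / (m + 1)! * g (m + 1)) + g 0 := by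
    funext y
    rw [(summable_pow_div_factorial_mul hg y).tsum_eq_zero_add]
    simp [add_comm]
  have hterm : ∀ m y, HasDerivAt (fun z => z ^ (m + 1) / (m + 1)! * g (m + 1))
      (y ^ m / m ! * g (m + 1)) y := fun m y => by
    refine (((hasDerivAt_pow (m + 1) y).div_const ((m + 1)! : ℝ)).mul_const
      (g (m + 1))).congr_deriv ?_
    rw [Nat.factorial_succ]
    push_cast
    field_simp
  have hbound : ∀ m, ∀ y ∈ Set.Ioo (-R) R,
      ‖y ^ m / m ! * g (m + 1)‖ ≤ |C| * |c| * ((R * |c|) ^ m / m !) := fun m y hy => by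
    have hyR : |y| ≤ R := (abs_lt.2 hy).le
    rw [norm_eq_abs, abs_mul, abs_div, abs_pow, Nat.abs_cast]
    calc |y| ^ m / m ! * |g (m + 1)| ≤ R ^ m / m ! * (|C| * |c| ^ (m + 1)) :=
          mul_le_mul (by gcongr) (abs_le_abs_mul_abs_pow hg _) (abs_nonneg _)
            (div_nonneg (pow_nonneg (hR.le) _) (Nat.cast_nonneg _))
      _ = |C| * |c| * ((R * |c|) ^ m / m !) := by ring
  have h0 : (0 : ℝ) ∈ Set.Ioo (-R) R := ⟨neg_lt_zero.2 hR, hR⟩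
  rw [hshift]
  exact (hasDerivAt_tsum_of_isPreconnected
    ((summable_pow_div_factorial _).mul_left _) isOpen_Ioo isPreconnected_Ioo
    (fun m y _ => hterm m y) hbound h0 (by simp) (abs_lt.1 hxR)).add_const _

lemma poissonPMF_mul_eq (μ a : ℝ) (k : ℕ) :
    poissonPMF μ k * a = exp (-μ) * (μ ^ k / k ! * a) := by
  rw [poissonPMF]; ring

lemma hasSum_poissonPMF (μ : ℝ) : HasSum (fun k => poissonPMF μ k) 1 := by
  have h := (NormedSpace.expSeries_div_hasSum_exp μ).mul_left (exp (-μ))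
  rw [← exp_eq_exp_ℝ, ← exp_add, neg_add_cancel, exp_zero] at h
  simpa only [poissonPMF, mul_div_assoc] using h

lemma summable_poissonPMF_mul (hg : ∀ k, |g k| ≤ C * c ^ k) (μ : ℝ) :
    Summable (fun k => poissonPMF μ k * g k) := by
  simp_rw [poissonPMF_mul_eq]
  exact (summable_pow_div_factorial_mul hg μ).mul_left _

lemma summable_norm_poissonPMF_mul_pow (μ c : ℝ) :
    Summable (fun k => ‖poissonPMF μ k * c ^ k‖) :=
  (summable_poissonPMF_mul (C := 1) (c := |c|) (fun k => by simp [abs_pow]) μ).norm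

lemma tsum_poissonPMF_mul (μ : ℝ) (g : ℕ → ℝ) :
    ∑' k, poissonPMF μ k * g k = exp (-μ) * ∑' k, μ ^ k / k ! * g k := by
  simp_rw [poissonPMF_mul_eq]
  exact tsum_mul_left

theorem hasDerivAt_tsum_poissonPMF_mul (hg : ∀ k, |g k| ≤ C * c ^ k) (μ : ℝ) :
    HasDerivAt (fun ν => ∑' k, poissonPMF ν k * g k)
      (∑' k, poissonPMF μ k * (g (k + 1) - g k)) μ := by
  have hg_succ : ∀ k, |g (k + 1)| ≤ C * c * c ^ k := fun k => (hg (k + 1)).trans_eq (by ring)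
  rw [show (fun ν => ∑' k, poissonPMF ν k * g k) = fun ν => exp (-ν) * ∑' k, ν ^ k / k ! * g k
    from funext fun ν => tsum_poissonPMF_mul ν g]
  refine ((hasDerivAt_neg μ).exp.mul (hasDerivAt_tsum_pow_div_factorial_mul hg μ)).congr_deriv ?_
  simp_rw [mul_sub]
  rw [(summable_poissonPMF_mul hg_succ μ).tsum_sub (summable_poissonPMF_mul hg μ),
    tsum_poissonPMF_mul, tsum_poissonPMF_mul]
  ring

end PoissonSeries

/-- By `log_Zcav_cons`, the mean gain of `ln Z_{n,t}` beyond `ln cosh β` when one external field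
is added at a uniform site. -/
noncomputable def cavityIncrement (n : ℕ) (β : ℝ) {k k' : ℕ} (b : Fin k → Fin n × Fin n)
    (l : Fin k' → Fin n) : ℝ :=
  (1 / (n : ℝ)) * ∑ i₀ : Fin n, log (1 + tanh β * gibbsCav n β b l (fun σ => (σ i₀ : ℝ)))

section Increment

variable {n k k' : ℕ} (hn : 1 ≤ n) (β : ℝ) (b : Fin k → Fin n × Fin n) (l : Fin k' → Fin n)
include hn

lemma sum_log_Zcav_cons_div :
    (∑ i₀ : Fin n, log (Zcav n β b (Fin.cons i₀ l))) / n
      = log (Zcav n β b l) + log (cosh β) + cavityIncrement n β b l := by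
  have hn' : (n : ℝ) ≠ 0 := by positivity
  simp only [log_Zcav_cons, sum_add_distrib, sum_const, card_univ, Fintype.card_fin,
    nsmul_eq_mul, cavityIncrement]
  field_simp

lemma abs_cavityIncrement_le : |cavityIncrement n β b l| ≤ 2 + (1 - |tanh β|)⁻¹ := by
  have : Nonempty (Fin n) := ⟨⟨0, hn⟩⟩
  have h := abs_sum_div_card_le (abs_log_one_add_tanh_mul_gibbsCav_le β b l)
  rwa [Fintype.card_fin, div_eq_inv_mul, ← one_div] at h

end Increment

lemma sum_pi_fin_succ {n k' : ℕ} (f : (Fin (k' + 1) → Fin n) → ℝ) :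
    ∑ l, f l = ∑ l : Fin k' → Fin n, ∑ i₀ : Fin n, f (Fin.cons i₀ l) := by
  rw [← (Fin.consEquiv fun _ => Fin n).sum_comp, Fintype.sum_prod_type, sum_comm]
  rfl

section QuenchedAverages

variable {n : ℕ} (F : (k : ℕ) → (Fin k → Fin n × Fin n) → (k' : ℕ) → (Fin k' → Fin n) → ℝ)

noncomputable def cavAvg (n : ℕ)
    (F : (k : ℕ) → (Fin k → Fin n × Fin n) → (k' : ℕ) → (Fin k' → Fin n) → ℝ) (k k' : ℕ) : ℝ :=
  (∑ b : Fin k → Fin n × Fin n, ∑ l : Fin k' → Fin n, F k b k' l) /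
    (((n : ℝ) ^ 2) ^ k * (n : ℝ) ^ k')

/-- `E_t[F | k']`: the quenched average with the number `k'` of external fields fixed. -/
noncomputable def quenchedCavCond (n : ℕ) (α : ℝ)
    (F : (k : ℕ) → (Fin k → Fin n × Fin n) → (k' : ℕ) → (Fin k' → Fin n) → ℝ) (k' : ℕ) : ℝ :=
  ∑' k : ℕ, poissonPMF (α * n) k * cavAvg n F k k'

lemma card_realizations (n k k' : ℕ) :
    (Fintype.card ((Fin k → Fin n × Fin n) × (Fin k' → Fin n)) : ℝ)
      = ((n : ℝ) ^ 2) ^ k * (n : ℝ) ^ k' := by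
  simp [sq]

lemma cavAvg_eq_sum_div_card (k k' : ℕ) :
    cavAvg n F k k' = (∑ p : (Fin k → Fin n × Fin n) × (Fin k' → Fin n), F k p.1 k' p.2)
      / Fintype.card ((Fin k → Fin n × Fin n) × (Fin k' → Fin n)) := by
  rw [cavAvg, card_realizations, Fintype.sum_prod_type]

lemma abs_cavAvg_le (hn : 1 ≤ n) {k k' : ℕ} {B : ℝ} (hF : ∀ b l, |F k b k' l| ≤ B) :
    |cavAvg n F k k'| ≤ B := by
  have : Nonempty (Fin n) := ⟨⟨0, hn⟩⟩
  rw [cavAvg_eq_sum_div_card]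
  exact abs_sum_div_card_le fun p => hF p.1 p.2

lemma cavAvg_add (G : (k : ℕ) → (Fin k → Fin n × Fin n) → (k' : ℕ) → (Fin k' → Fin n) → ℝ)
    (k k' : ℕ) :
    cavAvg n (fun k b k' l => F k b k' l + G k b k' l) k k'
      = cavAvg n F k k' + cavAvg n G k k' := by
  simp only [cavAvg, sum_add_distrib, add_div]

lemma cavAvg_const (hn : 1 ≤ n) (a : ℝ) (k k' : ℕ) : cavAvg n (fun _ _ _ _ => a) k k' = a := by
  have : Nonempty (Fin n) := ⟨⟨0, hn⟩⟩
  rw [cavAvg_eq_sum_div_card, sum_const, card_univ, nsmul_eq_mul,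
    mul_div_cancel_left₀ _ (by positivity)]

lemma cavAvg_succ (hn : 1 ≤ n) (k k' : ℕ) :
    cavAvg n F k (k' + 1)
      = cavAvg n (fun k b k' l => (∑ i₀ : Fin n, F k b (k' + 1) (Fin.cons i₀ l)) / n) k k' := by
  have hn' : (n : ℝ) ≠ 0 := by positivity
  simp only [cavAvg, sum_pi_fin_succ, ← sum_div, pow_succ]
  field_simp

end QuenchedAverages

section Growth

variable {n : ℕ} (hn : 1 ≤ n)
  {F : (k : ℕ) → (Fin k → Fin n × Fin n) → (k' : ℕ) → (Fin k' → Fin n) → ℝ} {C c : ℝ}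
  (hF : ∀ k b k' l, |F k b k' l| ≤ C * c ^ k * c ^ k')
include hn hF

lemma abs_cavAvg_le_abs_mul_pow (k k' : ℕ) : |cavAvg n F k k'| ≤ |C| * |c| ^ k * |c| ^ k' :=
  abs_cavAvg_le F hn fun b l =>
    (hF k b k' l).trans ((le_abs_self _).trans_eq (by simp only [abs_mul, abs_pow]))

lemma summable_poissonPMF_mul_cavAvg (μ : ℝ) (k' : ℕ) :
    Summable (fun k => poissonPMF μ k * cavAvg n F k k') :=
  summable_poissonPMF_mul (C := |C| * |c| ^ k') (c := |c|)
    (fun k => (abs_cavAvg_le_abs_mul_pow hn hF k k').trans_eq (by ring)) μ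

lemma exists_abs_quenchedCavCond_le (α : ℝ) :
    ∃ D, ∀ k', |quenchedCavCond n α F k'| ≤ D * |c| ^ k' := by
  refine ⟨(∑' k, ‖poissonPMF (α * n) k * c ^ k‖) * |C|, fun k' => ?_⟩
  have hterm : ∀ k, ‖poissonPMF (α * n) k * cavAvg n F k k'‖
      ≤ ‖poissonPMF (α * n) k * c ^ k‖ * (|C| * |c| ^ k') := fun k => by
    rw [norm_eq_abs, norm_eq_abs, abs_mul, abs_mul, abs_pow]
    calc |poissonPMF (α * n) k| * |cavAvg n F k k'|
        ≤ |poissonPMF (α * n) k| * (|C| * |c| ^ k * |c| ^ k') := by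
          gcongr; exact abs_cavAvg_le_abs_mul_pow hn hF k k'
      _ = _ := by ring
  have hsum := (summable_norm_poissonPMF_mul_pow (α * n) c).hasSum.mul_right (|C| * |c| ^ k')
  exact (tsum_of_norm_bounded hsum hterm).trans_eq (by ring)

theorem quenchedCav_eq_tsum_quenchedCavCond (α t : ℝ) :
    quenchedCav n α t F = ∑' k', poissonPMF (2 * α * t) k' * quenchedCavCond n α F k' := by
  set f : ℕ → ℕ → ℝ := fun k k' =>
    poissonPMF (α * n) k * poissonPMF (2 * α * t) k' * cavAvg n F k k'
  have hf : Summable (Function.uncurry f) := by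
    refine .of_norm_bounded ((Summable.mul_norm (summable_norm_poissonPMF_mul_pow (α * n) c)
      (summable_norm_poissonPMF_mul_pow (2 * α * t) c)).mul_left |C|) fun p => ?_
    simp only [Function.uncurry, f, norm_eq_abs, abs_mul, abs_pow]
    calc |poissonPMF (α * n) p.1| * |poissonPMF (2 * α * t) p.2| * |cavAvg n F p.1 p.2|
        ≤ |poissonPMF (α * n) p.1| * |poissonPMF (2 * α * t) p.2|
            * (|C| * |c| ^ p.1 * |c| ^ p.2) := by
          gcongr; exact abs_cavAvg_le_abs_mul_pow hn hF p.1 p.2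
      _ = _ := by ring
  calc quenchedCav n α t F = ∑' k, ∑' k', f k k' := rfl
    _ = ∑' k', ∑' k, f k k' := hf.tsum_comm.symm
    _ = _ := tsum_congr fun k' => by
      rw [quenchedCavCond, ← tsum_mul_left]
      exact tsum_congr fun k => by ring

end Growth

section Streaming

variable {n : ℕ} (hn : 1 ≤ n) (α β : ℝ)
include hn

lemma cavAvg_log_Zcav_succ (k k' : ℕ) :
    cavAvg n (fun _ b _ l => log (Zcav n β b l)) k (k' + 1)
      = cavAvg n (fun _ b _ l => log (Zcav n β b l)) k k'
        + (log (cosh β) + cavAvg n (fun _ b _ l => cavityIncrement n β b l) k k') := by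
  rw [cavAvg_succ _ hn]
  simp only [sum_log_Zcav_cons_div hn]
  rw [cavAvg_add, cavAvg_add, cavAvg_const hn, add_assoc]

lemma quenchedCavCond_log_Zcav_succ (k' : ℕ) :
    quenchedCavCond n α (fun _ b _ l => log (Zcav n β b l)) (k' + 1)
      = quenchedCavCond n α (fun _ b _ l => log (Zcav n β b l)) k'
        + (log (cosh β) + quenchedCavCond n α (fun _ b _ l => cavityIncrement n β b l) k') := by
  have hlogZ := summable_poissonPMF_mul_cavAvg hn (fun k b k' l => abs_log_Zcav_le β b l) (α * n) k'
  have hinc := summable_poissonPMF_mul_cavAvg hn (c := 1)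
    (fun k b k' l => by simpa using abs_cavityIncrement_le hn β b l) (α * n) k'
  simp only [quenchedCavCond, cavAvg_log_Zcav_succ hn, mul_add]
  rw [Summable.tsum_add hlogZ (((hasSum_poissonPMF _).summable.mul_right _).add hinc),
    Summable.tsum_add ((hasSum_poissonPMF _).summable.mul_right _) hinc, tsum_mul_right,
    (hasSum_poissonPMF _).tsum_eq, one_mul]

end Streaming

theorem cavity_function_streaming_general (N : ℕ) (hN : 1 ≤ N) (αt β : ℝ) (t : ℝ) :
    HasDerivAt (fun t' : ℝ => Psi N αt β t')
      (2 * αt * Real.log (Real.cosh β)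
        + 2 * αt * quenchedCav N αt t (fun _ b _ l =>
            (1 / (N : ℝ)) * ∑ i₀ : Fin N,
              Real.log (1 + Real.tanh β * gibbsCav N β b l (fun σ => (σ i₀ : ℝ)))))
      t := by
  have hlogZ := fun k b k' l => abs_log_Zcav_le (n := N) (k := k) (k' := k') β b l
  have hinc : ∀ k b k' l, |cavityIncrement N β (k := k) (k' := k') b l|
      ≤ (2 + (1 - |tanh β|)⁻¹) * 1 ^ k * 1 ^ k' := fun k b k' l => by
    simpa using abs_cavityIncrement_le hN β b l
  obtain ⟨D, hG⟩ := exists_abs_quenchedCavCond_le hN hlogZ αt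
  obtain ⟨D', hH⟩ := exists_abs_quenchedCavCond_le hN hinc αt
  have hPsi : (fun t' => Psi N αt β t') = fun t' =>
      (∑' k', poissonPMF (2 * αt * t') k'
          * quenchedCavCond N αt (fun _ b _ l => log (Zcav N β b l)) k')
        - quenched N αt (fun _ b => log (Zdil N β b)) :=
    funext fun t' => by rw [Psi, quenchedCav_eq_tsum_quenchedCavCond hN hlogZ]
  rw [hPsi]
  refine (((hasDerivAt_tsum_poissonPMF_mul hG (2 * αt * t)).comp t
    ((hasDerivAt_id t).const_mul (2 * αt))).sub_const _).congr_deriv ?_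
  change _ = 2 * αt * log (cosh β)
    + 2 * αt * quenchedCav N αt t fun _ b _ l => cavityIncrement N β b l
  simp only [quenchedCavCond_log_Zcav_succ hN, add_sub_cancel_left, mul_add]
  rw [((hasSum_poissonPMF _).summable.mul_right _).tsum_add (summable_poissonPMF_mul hH _),
    tsum_mul_right, (hasSum_poissonPMF _).tsum_eq, quenchedCav_eq_tsum_quenchedCavCond hN hinc]
  ring

/-- **Streaming of the cavity function (finite `N`, exact form).**
For `t ∈ (0,1)` the map `t ↦ Ψ_N(α̃, β; t)` is differentiable, with
`∂Ψ_N/∂t = 2α̃·ln cosh β + 2α̃·E_t[(1/N) Σ_{i₀} ln(1 + θ·ω_t(σ_{i₀}))]`,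
where `θ = tanh β`. -/
theorem cavity_function_streaming (N : ℕ) (hN : 1 ≤ N) (αt β : ℝ)
    (hαt : 0 < αt) (hβ : 0 ≤ β) (t : ℝ) (ht : t ∈ Set.Ioo (0 : ℝ) 1) :
    HasDerivAt (fun t' : ℝ => Psi N αt β t')
      (2 * αt * Real.log (Real.cosh β)
        + 2 * αt * quenchedCav N αt t (fun _ b _ l =>
            (1 / (N : ℝ)) * ∑ i₀ : Fin N,
              Real.log (1 + Real.tanh β * gibbsCav N β b l (fun σ => (σ i₀ : ℝ)))))
      t :=
  cavity_function_streaming_general N hN αt β t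
end

section
/- Fix N ≥ 1, α > 1/2, and β ≥ 0 with θ = tanh β. The quenched pressure A_N(α,β) = (1/N)·E[ln Z_N(α,β)] is differentiable in β with ∂A_N/∂β = α · E[ (1/N²) Σ_{i,j ∈ Fin N} (ω(σ_i σ_j) + θ)/(1 + θ·ω(σ_i σ_j)) ], where ω is the Gibbs expectation of the realization and E the quenched expectation at connectivity α. -/
open scoped BigOperators

/-!
Since `|∂_β ln Z| = |ω(H)| ≤ k`, the Poisson tail `|p_k| k` dominates the derivative of the
quenched sum, so `∂_β E[ln Z] = E[ω(-H)] = E[Σ_ν ω(σ_{bν.1} σ_{bν.2})]`. Size-biasing the Poisson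
variable (`k p_k = λ p_{k-1}`) turns the `k` bonds into `λ = αN` times one freshly added uniform
bond `(i, j)` on top of a system with `k - 1` bonds. Writing its weight as
`e^{βσ_iσ_j} = cosh β (1 + θ σ_iσ_j)` gives `ω_{+(i,j)}(σ_iσ_j) = (ω(σ_iσ_j) + θ)/(1 + θ ω(σ_iσ_j))`.
-/

open Real

lemma spin_eq_one_or_neg_one (x : SpinVal) : (x : ℝ) = 1 ∨ (x : ℝ) = -1 := by
  have h := x.2
  simp only [SpinVal, Finset.mem_insert, Finset.mem_singleton] at h
  tauto

lemma spin_mul_spin_eq_one_or_neg_one {n : ℕ} (σ : Conf n) (i j : Fin n) :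
    (σ i : ℝ) * σ j = 1 ∨ (σ i : ℝ) * σ j = -1 := by
  rcases spin_eq_one_or_neg_one (σ i) with hi | hi <;>
    rcases spin_eq_one_or_neg_one (σ j) with hj | hj <;> simp [hi, hj]

instance (n : ℕ) : Nonempty (Conf n) :=
  ⟨fun _ => ⟨1, by simp⟩⟩

section Gibbs

variable {n k : ℕ}

lemma abs_Hdil_le (b : Fin k → Fin n × Fin n) (σ : Conf n) : |Hdil b σ| ≤ k := by
  rw [Hdil, abs_neg]
  calc |∑ ν, (σ (b ν).1 : ℝ) * σ (b ν).2|
      ≤ ∑ ν, |(σ (b ν).1 : ℝ) * σ (b ν).2| := Finset.abs_sum_le_sum_abs _ _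
    _ = ∑ _ν : Fin k, (1 : ℝ) := by
        refine Finset.sum_congr rfl fun ν _ => ?_
        rcases spin_mul_spin_eq_one_or_neg_one σ (b ν).1 (b ν).2 with h | h <;> simp [h]
    _ = k := by simp

lemma Zdil_pos (β : ℝ) (b : Fin k → Fin n × Fin n) : 0 < Zdil n β b :=
  Finset.sum_pos (fun _ _ => exp_pos _) Finset.univ_nonempty

lemma Zdil_zero (b : Fin k → Fin n × Fin n) : Zdil n 0 b = Fintype.card (Conf n) := by
  simp [Zdil]

lemma abs_gibbs_le (β : ℝ) (b : Fin k → Fin n × Fin n) {f : Conf n → ℝ} {M : ℝ}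
    (hf : ∀ σ, |f σ| ≤ M) : |gibbs n β b f| ≤ M := by
  have hZ := Zdil_pos β b
  rw [gibbs, abs_div, abs_of_pos hZ, div_le_iff₀ hZ, Zdil, Finset.mul_sum]
  refine (Finset.abs_sum_le_sum_abs _ _).trans (Finset.sum_le_sum fun σ _ => ?_)
  rw [abs_mul, abs_of_pos (exp_pos _)]
  exact mul_le_mul_of_nonneg_right (hf σ) (exp_pos _).le

lemma abs_gibbs_neg_Hdil_le (β : ℝ) (b : Fin k → Fin n × Fin n) :
    |gibbs n β b (fun σ => -Hdil b σ)| ≤ k :=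
  abs_gibbs_le β b fun σ => (abs_neg (Hdil b σ)).trans_le (abs_Hdil_le b σ)

lemma gibbs_sum (β : ℝ) (b : Fin k → Fin n × Fin n) {ι : Type*} (s : Finset ι)
    (f : ι → Conf n → ℝ) :
    gibbs n β b (fun σ => ∑ i ∈ s, f i σ) = ∑ i ∈ s, gibbs n β b (f i) := by
  simp only [gibbs, ← Finset.sum_div, Finset.sum_mul]
  rw [Finset.sum_comm]

lemma hasDerivAt_log_Zdil (β : ℝ) (b : Fin k → Fin n × Fin n) :
    HasDerivAt (fun β' => log (Zdil n β' b)) (gibbs n β b (fun σ => -Hdil b σ)) β := by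
  have hZ : HasDerivAt (fun β' => Zdil n β' b)
      (∑ σ, -Hdil b σ * exp (-β * Hdil b σ)) β := by
    refine HasDerivAt.fun_sum fun σ _ => ?_
    simpa [mul_comm] using ((hasDerivAt_id β).neg.mul_const (Hdil b σ)).exp
  simpa [gibbs, Zdil] using hZ.log (Zdil_pos β b).ne'

end Gibbs

lemma exp_mul_eq_cosh_mul_one_add_tanh_mul (β : ℝ) {s : ℝ} (hs : s = 1 ∨ s = -1) :
    exp (β * s) = cosh β * (1 + tanh β * s) := by
  have hc := (cosh_pos β).ne'
  rcases hs with rfl | rfl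
  · rw [tanh_eq_sinh_div_cosh, ← cosh_add_sinh]
    field_simp
  · rw [tanh_eq_sinh_div_cosh, mul_neg_one, ← cosh_sub_sinh, sub_eq_add_neg]
    field_simp

section BondInsertion

variable {n k : ℕ} (β : ℝ) (ν : Fin (k + 1)) (p : Fin n × Fin n) (b : Fin k → Fin n × Fin n)

lemma Hdil_insertNth (σ : Conf n) :
    Hdil (ν.insertNth p b) σ = -((σ p.1 : ℝ) * σ p.2) + Hdil b σ := by
  simp only [Hdil, Fin.sum_univ_succAbove _ ν, Fin.insertNth_apply_same,
    Fin.insertNth_apply_succAbove]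
  ring

lemma exp_neg_mul_Hdil_insertNth (σ : Conf n) :
    exp (-β * Hdil (ν.insertNth p b) σ)
      = cosh β * (1 + tanh β * (σ p.1 * σ p.2)) * exp (-β * Hdil b σ) := by
  rw [Hdil_insertNth, ← exp_mul_eq_cosh_mul_one_add_tanh_mul β
    (spin_mul_spin_eq_one_or_neg_one σ p.1 p.2), ← exp_add]
  ring_nf

lemma gibbs_insertNth :
    gibbs n β (ν.insertNth p b) (fun σ => (σ p.1 : ℝ) * σ p.2)
      = (gibbs n β b (fun σ => (σ p.1 : ℝ) * σ p.2) + tanh β) /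
        (1 + tanh β * gibbs n β b (fun σ => (σ p.1 : ℝ) * σ p.2)) := by
  set s : Conf n → ℝ := fun σ => (σ p.1 : ℝ) * σ p.2
  set A := ∑ σ, s σ * exp (-β * Hdil b σ)
  set Z := Zdil n β b
  have hnum : ∑ σ, s σ * exp (-β * Hdil (ν.insertNth p b) σ) = cosh β * (A + tanh β * Z) := by
    simp only [exp_neg_mul_Hdil_insertNth, A, Z, Zdil, Finset.mul_sum, ← Finset.sum_add_distrib]
    refine Finset.sum_congr rfl fun σ _ => ?_
    rcases spin_mul_spin_eq_one_or_neg_one σ p.1 p.2 with h | h <;> simp only [s, h] <;> ring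
  have hden : Zdil n β (ν.insertNth p b) = cosh β * (Z + tanh β * A) := by
    simp only [Zdil, exp_neg_mul_Hdil_insertNth, A, Z, Finset.mul_sum, ← Finset.sum_add_distrib]
    exact Finset.sum_congr rfl fun σ _ => by ring
  have hZ : Z ≠ 0 := (Zdil_pos β b).ne'
  have hω : gibbs n β b s = A / Z := rfl
  rw [gibbs, hnum, hden, mul_div_mul_left _ _ (cosh_pos β).ne', hω,
    ← div_div_div_cancel_right₀ hZ]
  congr 1 <;> field_simp

end BondInsertion

noncomputable def bondAverage (n k : ℕ) (f : (Fin k → Fin n × Fin n) → ℝ) : ℝ :=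
  (∑ b, f b) / ((n : ℝ) ^ 2) ^ k

section BondAverage

variable {n k : ℕ}

lemma quenched_eq_tsum (α : ℝ) (F : (k : ℕ) → (Fin k → Fin n × Fin n) → ℝ) :
    quenched n α F = ∑' k, poissonPMF (α * n) k * bondAverage n k (F k) :=
  rfl

lemma abs_bondAverage_le {f : (Fin k → Fin n × Fin n) → ℝ} {M : ℝ} (hM : 0 ≤ M)
    (hf : ∀ b, |f b| ≤ M) : |bondAverage n k f| ≤ M := by
  rw [bondAverage, abs_div, abs_of_nonneg (a := ((n : ℝ) ^ 2) ^ k) (by positivity)]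
  refine div_le_of_le_mul₀ (by positivity) hM ?_
  calc |∑ b, f b| ≤ ∑ b, |f b| := Finset.abs_sum_le_sum_abs _ _
    _ ≤ Finset.univ.card • M := Finset.sum_le_card_nsmul _ _ _ fun b _ => hf b
    _ = M * ((n : ℝ) ^ 2) ^ k := by simp [sq, mul_comm]

lemma bondAverage_sum {ι : Type*} (s : Finset ι) (f : ι → (Fin k → Fin n × Fin n) → ℝ) :
    bondAverage n k (fun b => ∑ i ∈ s, f i b) = ∑ i ∈ s, bondAverage n k (f i) := by
  simp only [bondAverage, ← Finset.sum_div]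
  rw [Finset.sum_comm]

lemma bondAverage_succ (ν : Fin (k + 1)) (f : (Fin (k + 1) → Fin n × Fin n) → ℝ) :
    bondAverage n (k + 1) f
      = bondAverage n k (fun b => 1 / (n : ℝ) ^ 2 * ∑ i, ∑ j, f (ν.insertNth (i, j) b)) := by
  rw [bondAverage, bondAverage, ← Finset.mul_sum,
    ← (Fin.insertNthEquiv (fun _ => Fin n × Fin n) ν).sum_comp, Fintype.sum_prod_type,
    Finset.sum_comm, pow_succ]
  simp only [Fintype.sum_prod_type, Fin.insertNthEquiv, Equiv.coe_fn_mk]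
  ring

end BondAverage

/-- Each of the `k + 1` bonds contributes the Gibbs average of its own spin product; removing it
and averaging over its endpoints, `gibbs_insertNth` expresses that in the system with `k` bonds. -/
lemma bondAverage_gibbs_neg_Hdil_succ (n k : ℕ) (β : ℝ) :
    bondAverage n (k + 1) (fun b => gibbs n β b (fun σ => -Hdil b σ))
      = (k + 1) * bondAverage n k (fun b => 1 / (n : ℝ) ^ 2 * ∑ i, ∑ j,
          (gibbs n β b (fun σ => (σ i : ℝ) * σ j) + tanh β) /
            (1 + tanh β * gibbs n β b (fun σ => (σ i : ℝ) * σ j))) := by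
  have hbonds : ∀ b : Fin (k + 1) → Fin n × Fin n, gibbs n β b (fun σ => -Hdil b σ)
      = ∑ ν, gibbs n β b (fun σ => (σ (b ν).1 : ℝ) * σ (b ν).2) := by
    intro b
    rw [← gibbs_sum]
    simp [Hdil]
  simp only [hbonds, bondAverage_sum]
  rw [Finset.sum_congr rfl fun ν _ => bondAverage_succ ν _]
  simp [Fin.insertNth_apply_same, gibbs_insertNth]

lemma summable_poissonPMF (lam : ℝ) : Summable (poissonPMF lam) :=
  ((summable_pow_div_factorial lam).mul_left (exp (-lam))).congr fun k => by
    rw [poissonPMF, mul_div_assoc]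

lemma poissonPMF_succ_mul (lam : ℝ) (k : ℕ) :
    poissonPMF lam (k + 1) * (k + 1) = lam * poissonPMF lam k := by
  have hk : (k.factorial : ℝ) ≠ 0 := by positivity
  simp only [poissonPMF, Nat.factorial_succ, Nat.cast_mul, Nat.cast_succ]
  field_simp
  ring

lemma summable_abs_poissonPMF_mul (lam : ℝ) : Summable fun k => |poissonPMF lam k| * k := by
  have h : Summable fun k => poissonPMF lam k * k := by
    rw [← summable_nat_add_iff 1]
    refine ((summable_poissonPMF lam).mul_left lam).congr fun k => ?_
    push_cast
    rw [poissonPMF_succ_mul]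
  simpa [abs_mul] using h.abs

/-- Poisson size-biasing `E[K c(K - 1)] = λ E[c(K)]` for `K ∼ Poisson(λ)`, in the form
`a k = k c(k - 1)`. -/
lemma tsum_poissonPMF_mul_eq_mul_tsum {lam : ℝ} {a c : ℕ → ℝ}
    (ha : Summable fun k => poissonPMF lam k * a k) (h₀ : a 0 = 0)
    (hsucc : ∀ k, a (k + 1) = (k + 1) * c k) :
    ∑' k, poissonPMF lam k * a k = lam * ∑' k, poissonPMF lam k * c k := by
  rw [ha.tsum_eq_zero_add, h₀, mul_zero, zero_add, ← tsum_mul_left]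
  refine tsum_congr fun k => ?_
  rw [hsucc, ← mul_assoc, poissonPMF_succ_mul, mul_assoc]

lemma abs_poissonPMF_mul_bondAverage_le {n k : ℕ} (lam : ℝ)
    {f : (Fin k → Fin n × Fin n) → ℝ} {M : ℝ} (hM : 0 ≤ M) (hf : ∀ b, |f b| ≤ M) :
    |poissonPMF lam k * bondAverage n k f| ≤ |poissonPMF lam k| * M := by
  rw [abs_mul]
  exact mul_le_mul_of_nonneg_left (abs_bondAverage_le hM hf) (abs_nonneg _)

/-- Dominated differentiation of the Poisson series, with majorant `|p_k| k`. -/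
theorem hasDerivAt_quenched {n : ℕ} (α : ℝ) {F F' : ℝ → (k : ℕ) → (Fin k → Fin n × Fin n) → ℝ}
    {y₀ C : ℝ} (hF : ∀ y k b, HasDerivAt (fun y => F y k b) (F' y k b) y)
    (hF' : ∀ y k b, |F' y k b| ≤ k) (hF₀ : ∀ k b, |F y₀ k b| ≤ C) (β : ℝ) :
    HasDerivAt (fun y => quenched n α (F y)) (quenched n α (F' β)) β := by
  simp only [quenched_eq_tsum]
  have hderiv : ∀ k y, HasDerivAt (fun y => poissonPMF (α * n) k * bondAverage n k (F y k))
      (poissonPMF (α * n) k * bondAverage n k (F' y k)) y := fun k y =>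
    ((HasDerivAt.fun_sum fun b _ => hF y k b).div_const _).const_mul _
  have hbound : ∀ k y, ‖poissonPMF (α * n) k * bondAverage n k (F' y k)‖
      ≤ |poissonPMF (α * n) k| * k := fun k y =>
    abs_poissonPMF_mul_bondAverage_le _ k.cast_nonneg (hF' y k)
  have hsummable₀ : Summable fun k => poissonPMF (α * n) k * bondAverage n k (F y₀ k) :=
    .of_norm_bounded ((summable_poissonPMF (α * n)).abs.mul_right |C|) fun k =>
      abs_poissonPMF_mul_bondAverage_le _ (abs_nonneg C) fun b => (hF₀ k b).trans (le_abs_self C)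
  exact hasDerivAt_tsum (summable_abs_poissonPMF_mul (α * n)) hderiv hbound hsummable₀ β

theorem pressure_hasDerivAt_beta_general (N : ℕ) (hN : 1 ≤ N) (α : ℝ)
    (β : ℝ) (θ : ℝ) (hθ : θ = Real.tanh β) :
    HasDerivAt (fun β' : ℝ =>
        (1 / (N : ℝ)) * quenched N α (fun _ b => Real.log (Zdil N β' b)))
      (α * quenched N α (fun _ b =>
        (1 / (N : ℝ) ^ 2) * ∑ i : Fin N, ∑ j : Fin N,
          (gibbs N β b (fun σ => (σ i : ℝ) * (σ j : ℝ)) + θ) /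
            (1 + θ * gibbs N β b (fun σ => (σ i : ℝ) * (σ j : ℝ)))))
      β := by
  subst hθ
  have hN₀ : (N : ℝ) ≠ 0 := by positivity
  have hderiv := hasDerivAt_quenched (n := N) α (fun y _ b => hasDerivAt_log_Zdil y b)
    (fun y _ b => abs_gibbs_neg_Hdil_le y b) (y₀ := 0)
    (fun _ b => (congrArg (|log ·|) (Zdil_zero b)).le) β
  have henergy := tsum_poissonPMF_mul_eq_mul_tsum (lam := α * N)
    (.of_norm_bounded (summable_abs_poissonPMF_mul (α * N)) fun k =>
      abs_poissonPMF_mul_bondAverage_le _ k.cast_nonneg (abs_gibbs_neg_Hdil_le β))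
    (by simp [bondAverage, Hdil, gibbs]) (bondAverage_gibbs_neg_Hdil_succ N · β)
  rw [← quenched_eq_tsum, ← quenched_eq_tsum] at henergy
  refine (hderiv.const_mul (1 / (N : ℝ))).congr_deriv ?_
  rw [henergy, mul_comm α, ← mul_assoc, ← mul_assoc, one_div_mul_cancel hN₀, one_mul]

/-- **Internal-energy formula (finite `N`, exact form).** With `θ = tanh β`, the
quenched pressure `A_N(α,β) = (1/N)·E[ln Z_N(α,β)]` is differentiable in `β` with
`∂A_N/∂β = α·E[(1/N²) Σ_{i,j} (ω(σ_iσ_j) + θ)/(1 + θ·ω(σ_iσ_j))]`. -/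
theorem pressure_hasDerivAt_beta (N : ℕ) (hN : 1 ≤ N) (α : ℝ) (hα : 1 / 2 < α)
    (β : ℝ) (hβ : 0 ≤ β) (θ : ℝ) (hθ : θ = Real.tanh β) :
    HasDerivAt (fun β' : ℝ =>
        (1 / (N : ℝ)) * quenched N α (fun _ b => Real.log (Zdil N β' b)))
      (α * quenched N α (fun _ b =>
        (1 / (N : ℝ) ^ 2) * ∑ i : Fin N, ∑ j : Fin N,
          (gibbs N β b (fun σ => (σ i : ℝ) * (σ j : ℝ)) + θ) /
            (1 + θ * gibbs N β b (fun σ => (σ i : ℝ) * (σ j : ℝ)))))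
      β :=
  pressure_hasDerivAt_beta_general N hN α β θ hθ
end
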